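/- For every string T ∈ P_Σ* and threshold k ∈ ℤ+, there exists a set I of periodic-block fragments of T with |I| ≤ |red(T)|/(2k) such that the set of black positions of T equals the union over T[l..r) ∈ I of the intervals [l+5k..r−5k). -/

import Mathlib

open scoped NNReal ENNReal

attribute [local instance] Classical.propDecidable

/-- A labeled parenthesis over the alphabet `α`: `(true, a)` is the opening
parenthesis with label `a`, and `(false, a)` is the closing parenthesis. -/
abbrev Paren (α : Type*) := Bool × α

/-- Balanced strings of labeled parentheses (forests), following Definition 2.1:
the smallest set containing the empty string, closed under concatenation, and
containing `(_a · F · )_a` for every forest `F` and label `a`. -/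
inductive IsForest {α : Type*} : List (Paren α) → Prop
  | nil : IsForest []
  | append {F G : List (Paren α)} : IsForest F → IsForest G → IsForest (F ++ G)
  | wrap {F : List (Paren α)} (a : α) : IsForest F → IsForest ((true, a) :: F ++ [(false, a)])

/-- The fragment `l[i..j)` of a list. -/
def frag {β : Type*} (l : List β) (i j : ℕ) : List β := (l.take j).drop i

/-- A string `S` over `P_Σ` is a periodic block (Definition 5.4): `|S| ≥ 42k` and
`S` has a string period of length at most `4k` containing equally many opening
and closing parentheses. -/
def IsPeriodicBlock {α : Type*} (k : ℕ) (S : List (Paren α)) : Prop :=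
  42 * k ≤ S.length ∧ ∃ p, 0 < p ∧ p ≤ 4 * k ∧
    (∀ i, i + p < S.length → S[i]? = S[i + p]?) ∧
    (S.take p).countP (fun c => c.1) = (S.take p).countP (fun c => !c.1)

/-- A character `T[i]` is black (Definition 5.5) if there exists a periodic block
`T[l..r)` of `T` such that `i ∈ [l + 5k..r − 5k)`; otherwise it is red. -/
def IsBlack {α : Type*} (k : ℕ) (T : List (Paren α)) (i : ℕ) : Prop :=
  ∃ l r, r ≤ T.length ∧ l + 5 * k ≤ i ∧ i + 5 * k < r ∧ IsPeriodicBlock k (frag T l r)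

/-- The number of red characters of `T`. -/
noncomputable def redCount {α : Type*} (k : ℕ) (T : List (Paren α)) : ℕ :=
  ((Finset.range T.length).filter fun i => ¬ IsBlack k T i).card

/-!
Two periodic blocks overlapping in at least `8k` positions merge into one block: by the
Fine–Wilf argument the overlap has period `g = gcd p₁ p₂`, this period propagates over the second
block, hence so does its multiple `p₁`, and `p₁` with its balanced count then witnesses the union.
Consequently every black position lies in the core `[l + 5k..r − 5k)` of an inclusion-maximal
block `T[l..r)`, and the `2k` positions `[l + 3k..l + 5k)` of a maximal block are red: a block
making one of them black would merge with `T[l..r)` into a strictly larger block. The same merging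
shows that left ends of distinct maximal blocks are at least `2k` apart, so these windows of red
positions are disjoint.
-/

open Finset

section Periodicity

variable {γ : Type*} {f : ℕ → γ} {p q g a a' b b' c d : ℕ}

def HasPeriodOn (f : ℕ → γ) (p a b : ℕ) : Prop :=
  ∀ i, a ≤ i → i + p < b → f i = f (i + p)

theorem HasPeriodOn.mono (h : HasPeriodOn f p a b) (ha : a ≤ a') (hb : b' ≤ b) :
    HasPeriodOn f p a' b' :=
  fun i hi hib => h i (ha.trans hi) (hib.trans_le hb)

theorem HasPeriodOn.mul (h : HasPeriodOn f p a b) (m : ℕ) : HasPeriodOn f (m * p) a b := by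
  induction m with
  | zero => intro i _ _; simp
  | succ m ih =>
    intro i hi hib
    rw [Nat.succ_mul] at hib ⊢
    rw [ih i hi (by omega), ← add_assoc]
    exact h _ (by omega) (by omega)

theorem HasPeriodOn.of_dvd (h : HasPeriodOn f g a b) (hd : g ∣ p) : HasPeriodOn f p a b := by
  obtain ⟨m, rfl⟩ := hd
  rw [mul_comm]
  exact h.mul m

theorem HasPeriodOn.union (h₁ : HasPeriodOn f p a c) (h₂ : HasPeriodOn f p d b)
    (h : d + p ≤ c) : HasPeriodOn f p a b := fun i hi hib =>
  if hc : i + p < c then h₁ i hi hc else h₂ i (by omega) hib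

theorem HasPeriodOn.extend_right (hp : HasPeriodOn f p a b) (hp0 : 0 < p)
    (hg : HasPeriodOn f g a c) (hc : a + p + g ≤ c) (hcb : c ≤ b) : HasPeriodOn f g a b := by
  induction b, hcb using Nat.le_induction with
  | base => exact hg
  | succ n hcn ih =>
    have ih := ih (hp.mono le_rfl n.le_succ)
    intro i hi hin
    by_cases hi' : i + g < n
    · exact ih i hi hi'
    -- `f i = f (i - p) = f (i - p + g) = f (i + g)`, where `i + g = n`
    have h₁ := hp (i - p) (by omega) (by omega)
    have h₂ := ih (i - p) (by omega) (by omega)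
    have h₃ := hp (i - p + g) (by omega) (by omega)
    rw [Nat.sub_add_cancel (by omega)] at h₁
    rw [show i - p + g + p = i + g by omega] at h₃
    rw [← h₁, h₂, h₃]

/-- Fine and Wilf's periodicity lemma, in its weak form. -/
theorem HasPeriodOn.gcd (hp : HasPeriodOn f p a b) (hq : HasPeriodOn f q a b)
    (hab : a + p + q ≤ b) : HasPeriodOn f (p.gcd q) a b := by
  induction hn : p + q using Nat.strong_induction_on generalizing p q b with
  | _ n ih =>
    wlog hqp : q ≤ p generalizing p q
    · rw [Nat.gcd_comm]
      exact this hq hp (by omega) (by omega) (by omega)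
    rcases Nat.eq_zero_or_pos q with rfl | hq0
    · simpa using hp
    rcases hqp.eq_or_lt with rfl | hqp'
    · simpa using hp
    have hsub : HasPeriodOn f (p - q) a (b - q) := fun i hi hib => by
      rw [hp i hi (by omega), hq (i + (p - q)) (by omega) (by omega)]
      congr 1
      omega
    have hrec := ih p (by omega) hsub (hq.mono le_rfl (Nat.sub_le b q)) (by omega)
      (Nat.sub_add_cancel hqp)
    rw [Nat.gcd_sub_self_left hqp] at hrec
    have hg : p.gcd q ≤ p - q := by
      rw [← Nat.gcd_sub_self_left hqp]
      exact Nat.gcd_le_left q (Nat.sub_pos_of_lt hqp')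
    exact hq.extend_right hq0 hrec (by omega) (Nat.sub_le b q)

end Periodicity

section Frag

variable {β : Type*} {T : List β} {l r i p : ℕ}

theorem length_frag (hr : r ≤ T.length) : (frag T l r).length = r - l := by
  simp [frag, hr]

theorem getElem?_frag (h : l + i < r) : (frag T l r)[i]? = T[l + i]? := by
  simp [frag, h]

theorem take_frag (h : l + p ≤ r) : (frag T l r).take p = frag T l (l + p) := by
  simp [frag, List.take_drop, List.take_take, h]

end Frag

section Blocks

variable {α : Type*} {k : ℕ} {T : List (Paren α)} {q q' : ℕ × ℕ} {i : ℕ}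

theorem isPeriodicBlock_frag_iff {l r : ℕ} (hr : r ≤ T.length) :
    IsPeriodicBlock k (frag T l r) ↔ l + 42 * k ≤ r ∧ ∃ p, 0 < p ∧ p ≤ 4 * k ∧
      HasPeriodOn (T[·]?) p l r ∧
      (frag T l (l + p)).countP (·.1) = (frag T l (l + p)).countP (!·.1) := by
  unfold IsPeriodicBlock
  rw [length_frag hr]
  constructor
  · rintro ⟨hlen, p, hp0, hpk, hper, hbal⟩
    refine ⟨by omega, p, hp0, hpk, fun j hj hjr => ?_, by rwa [take_frag (by omega)] at hbal⟩
    have := hper (j - l) (by omega)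
    rwa [getElem?_frag (by omega), getElem?_frag (by omega), ← Nat.add_assoc,
      Nat.add_sub_cancel' hj] at this
  · rintro ⟨hlen, p, hp0, hpk, hper, hbal⟩
    refine ⟨by omega, p, hp0, hpk, fun i hi => ?_, by rwa [take_frag (by omega)]⟩
    rw [getElem?_frag (by omega), getElem?_frag (by omega), ← Nat.add_assoc]
    exact hper (l + i) (by omega) (by omega)

variable (k T) in
/-- `T[q.1..q.2) ∈ B_k(T)`. -/
def IsBlockFrag (q : ℕ × ℕ) : Prop :=
  q.2 ≤ T.length ∧ IsPeriodicBlock k (frag T q.1 q.2)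

variable (k T) in
def IsMaximalBlockFrag (q : ℕ × ℕ) : Prop :=
  IsBlockFrag k T q ∧ ∀ q', IsBlockFrag k T q' → q'.1 ≤ q.1 → q.2 ≤ q'.2 → q' = q

theorem IsBlockFrag.add_le (h : IsBlockFrag k T q) : q.1 + 42 * k ≤ q.2 :=
  ((isPeriodicBlock_frag_iff h.1).1 h.2).1

theorem IsBlockFrag.merge {l₁ r₁ l₂ r₂ : ℕ} (h₁ : IsBlockFrag k T (l₁, r₁))
    (h₂ : IsBlockFrag k T (l₂, r₂)) (hl : l₁ ≤ l₂) (hov : l₂ + 8 * k ≤ r₁) :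
    IsBlockFrag k T (l₁, max r₁ r₂) := by
  rcases le_total r₂ r₁ with h | h
  · rwa [max_eq_left h]
  rw [max_eq_right h]
  obtain ⟨hr₁, hb₁⟩ := h₁
  obtain ⟨hr₂, hb₂⟩ := h₂
  obtain ⟨-, p₁, hp₁, hp₁k, hper₁, hbal₁⟩ := (isPeriodicBlock_frag_iff hr₁).1 hb₁
  obtain ⟨hlen₂, p₂, hp₂, hp₂k, hper₂, -⟩ := (isPeriodicBlock_frag_iff hr₂).1 hb₂
  have hg : p₁.gcd p₂ ≤ p₁ := Nat.gcd_le_left p₂ hp₁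
  have hov_gcd : HasPeriodOn (T[·]?) (p₁.gcd p₂) l₂ r₁ :=
    (hper₁.mono hl le_rfl).gcd (hper₂.mono le_rfl h) (by omega)
  have hp₁_right : HasPeriodOn (T[·]?) p₁ l₂ r₂ :=
    (hper₂.extend_right hp₂ hov_gcd (by omega) h).of_dvd (Nat.gcd_dvd_left p₁ p₂)
  exact ⟨hr₂, (isPeriodicBlock_frag_iff hr₂).2
    ⟨by omega, p₁, hp₁, hp₁k, hper₁.union hp₁_right (by omega), hbal₁⟩⟩

theorem IsBlockFrag.exists_isMaximalBlockFrag (h : IsBlockFrag k T q) :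
    ∃ m, IsMaximalBlockFrag k T m ∧ m.1 ≤ q.1 ∧ q.2 ≤ m.2 := by
  set S := {q' | IsBlockFrag k T q' ∧ q'.1 ≤ q.1 ∧ q.2 ≤ q'.2}
  have hS : S.Finite := ((Set.finite_Iic q.1).prod (Set.finite_Iic T.length)).subset
    fun q' hq' => ⟨hq'.2.1, hq'.1.1⟩
  obtain ⟨m, ⟨hm, hm₁, hm₂⟩, hmax⟩ :=
    S.exists_max_image (fun q' => q'.2 - q'.1) hS ⟨q, h, le_rfl, le_rfl⟩
  refine ⟨m, ⟨hm, fun q' hq' h₁ h₂ => ?_⟩, hm₁, hm₂⟩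
  have := hmax q' ⟨hq', h₁.trans hm₁, hm₂.trans h₂⟩
  have := hq'.add_le
  have := hm.add_le
  exact Prod.ext (by omega) (by omega)

theorem IsMaximalBlockFrag.fst_eq_of_overlap (hq : IsMaximalBlockFrag k T q)
    (hq' : IsBlockFrag k T q') (h₁ : q'.1 ≤ q.1) (h₂ : q.1 + 8 * k ≤ q'.2) : q'.1 = q.1 :=
  (Prod.ext_iff.1 (hq.2 _ (hq'.merge hq.1 h₁ h₂) h₁ (le_max_right _ _))).1

theorem IsMaximalBlockFrag.eq_of_fst_eq (hq : IsMaximalBlockFrag k T q)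
    (hq' : IsMaximalBlockFrag k T q') (h : q.1 = q'.1) : q = q' := by
  rcases le_total q.2 q'.2 with h₂ | h₂
  · exact (hq.2 q' hq'.1 h.ge h₂).symm
  · exact hq'.2 q hq.1 h.le h₂

theorem IsMaximalBlockFrag.fst_add_le (hq : IsMaximalBlockFrag k T q)
    (hq' : IsMaximalBlockFrag k T q') (hne : q ≠ q') (hle : q.1 ≤ q'.1) :
    q.1 + 2 * k ≤ q'.1 := by
  by_contra! h
  have := hq.1.add_le
  exact hne (hq.eq_of_fst_eq hq' (hq'.fst_eq_of_overlap hq.1 hle (by omega)))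

theorem IsMaximalBlockFrag.not_isBlack (hq : IsMaximalBlockFrag k T q)
    (h₁ : q.1 + 3 * k ≤ i) (h₂ : i < q.1 + 5 * k) : ¬ IsBlack k T i := by
  rintro ⟨l, r, hr, hl, hir, hb⟩
  have := hq.fst_eq_of_overlap (q' := (l, r)) ⟨hr, hb⟩ (by dsimp; omega) (by dsimp; omega)
  dsimp at this
  omega

theorem isBlack_iff_exists_isMaximalBlockFrag :
    IsBlack k T i ↔ ∃ q, IsMaximalBlockFrag k T q ∧ q.1 + 5 * k ≤ i ∧ i + 5 * k < q.2 := by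
  constructor
  · rintro ⟨l, r, hr, hl, hir, hb⟩
    obtain ⟨m, hm, hm₁, hm₂⟩ := IsBlockFrag.exists_isMaximalBlockFrag (q := (l, r)) ⟨hr, hb⟩
    exact ⟨m, hm, by dsimp at hm₁; omega, by dsimp at hm₂; omega⟩
  · rintro ⟨q, ⟨⟨hr, hb⟩, -⟩, h₁, h₂⟩
    exact ⟨q.1, q.2, hr, h₁, h₂, hb⟩

variable (k T) in
noncomputable def maximalBlockFrags : Finset (ℕ × ℕ) :=
  (range (T.length + 1) ×ˢ range (T.length + 1)).filter (IsMaximalBlockFrag k T)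

theorem mem_maximalBlockFrags : q ∈ maximalBlockFrags k T ↔ IsMaximalBlockFrag k T q := by
  simp only [maximalBlockFrags, mem_filter, mem_product, mem_range, and_iff_right_iff_imp]
  intro hq
  have := hq.1.add_le
  have := hq.1.1
  omega

theorem two_mul_mul_card_maximalBlockFrags_le_redCount :
    2 * k * #(maximalBlockFrags k T) ≤ redCount k T := by
  set window : ℕ × ℕ → Finset ℕ := fun q => Ico (q.1 + 3 * k) (q.1 + 5 * k)
  have hdisj : (maximalBlockFrags k T : Set (ℕ × ℕ)).PairwiseDisjoint window := by
    intro q hq q' hq' hne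
    rw [mem_coe, mem_maximalBlockFrags] at hq hq'
    rw [Function.onFun, disjoint_left]
    intro i hi hi'
    simp only [window, mem_Ico] at hi hi'
    rcases le_total q.1 q'.1 with h | h
    · have := hq.fst_add_le hq' hne h
      omega
    · have := hq'.fst_add_le hq hne.symm h
      omega
  calc 2 * k * #(maximalBlockFrags k T)
      = #((maximalBlockFrags k T).biUnion window) := by
        rw [card_biUnion hdisj, sum_const_nat (m := 2 * k) fun q _ => by simp only [window, Nat.card_Ico]; omega,
          mul_comm]
    _ ≤ redCount k T := card_le_card fun i hi => by
        obtain ⟨q, hq, hi⟩ := mem_biUnion.1 hi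
        rw [mem_maximalBlockFrags] at hq
        simp only [window, mem_Ico] at hi
        have := hq.1.add_le
        have := hq.1.1
        exact mem_filter.2 ⟨mem_range.2 (by omega), hq.not_isBlack hi.1 hi.2⟩

end Blocks

theorem black_positions_covered_general {α : Type*} (k : ℕ)
    (T : List (Paren α)) :
    ∃ I : Finset (ℕ × ℕ),
      (∀ q ∈ I, q.2 ≤ T.length ∧ IsPeriodicBlock k (frag T q.1 q.2)) ∧
      2 * k * I.card ≤ redCount k T ∧
      ∀ i, IsBlack k T i ↔ ∃ q ∈ I, q.1 + 5 * k ≤ i ∧ i + 5 * k < q.2 := by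
  refine ⟨maximalBlockFrags k T, fun q hq => (mem_maximalBlockFrags.1 hq).1,
    two_mul_mul_card_maximalBlockFrags_le_redCount, fun i => ?_⟩
  rw [isBlack_iff_exists_isMaximalBlockFrag]
  simp only [mem_maximalBlockFrags]

/-- from Lemma C.6: for every string `T` and threshold
`k ∈ ℤ₊`, there exists a set `I` of periodic-block fragments of `T` with
`|I| ≤ |red(T)| / (2k)` (equivalently `2k·|I| ≤ |red(T)|`) such that the black
positions of `T` are exactly the union over `T[l..r) ∈ I` of the intervals
`[l + 5k..r − 5k)`. -/
theorem black_positions_covered {α : Type*} (k : ℕ) (hk : 0 < k)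
    (T : List (Paren α)) :
    ∃ I : Finset (ℕ × ℕ),
      (∀ q ∈ I, q.2 ≤ T.length ∧ IsPeriodicBlock k (frag T q.1 q.2)) ∧
      2 * k * I.card ≤ redCount k T ∧
      ∀ i, IsBlack k T i ↔ ∃ q ∈ I, q.1 + 5 * k ≤ i ∧ i + 5 * k < q.2 :=
  black_positions_covered_general k T
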